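/- For the trigonometric interpolation operator Q_N and any q ≥ 0 there is C_q > 0 such that ‖Q_N f‖_q ≤ ‖f‖_q + C_q N^{-1}‖f‖_{q+1} for all f ∈ H^{q+1} and all N ≥ 1. -/
import Mathlib

/-- Sobolev weight: `w_s(0) = 1`, `w_s(n) = |n|^s` for `n ≠ 0` (real exponent). -/
noncomputable def sobW (s : ℝ) (n : ℤ) : ℝ := if n = 0 then 1 else |(n : ℝ)| ^ s

/-- Squared periodic Sobolev norm of order `s`:
`‖φ‖_s² = |φ̂(0)|² + Σ_{n≠0} |n|^{2s}|φ̂(n)|²`. -/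
noncomputable def sobSq (s : ℝ) (φ : ℤ → ℂ) : ℝ := ∑' n : ℤ, sobW (2 * s) n * ‖φ n‖ ^ 2

/-- Fourier coefficients of the trigonometric interpolant `Q_N f` (aliasing formula). -/
noncomputable def QN (N : ℕ) (φ : ℤ → ℂ) : ℤ → ℂ :=
  fun n => if -(N : ℤ) ≤ 2 * n ∧ 2 * n < (N : ℤ) then ∑' ℓ : ℤ, φ (n + ℓ * N) else 0

private lemma tsum_cs {ι : Type*} {f g : ι → ℝ} (hf0 : ∀ i, 0 ≤ f i) (hg0 : ∀ i, 0 ≤ g i)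
    (hf : Summable fun i => f i ^ 2) (hg : Summable fun i => g i ^ 2) :
    ∑' i, f i * g i ≤ Real.sqrt (∑' i, f i ^ 2) * Real.sqrt (∑' i, g i ^ 2) := by
  have hfg : Summable fun i => f i * g i := by
    refine Summable.of_nonneg_of_le (fun i => mul_nonneg (hf0 i) (hg0 i)) (fun i => ?_)
      ((hf.add hg).mul_left (1/2))
    nlinarith [sq_nonneg (f i - g i)]
  refine Summable.tsum_le_of_sum_le hfg fun s => ?_
  have h1 := Finset.sum_mul_sq_le_sq_mul_sq s f g
  have h2 : ∑ i ∈ s, f i ^ 2 ≤ ∑' i, f i ^ 2 := Summable.sum_le_tsum s (fun i _ => sq_nonneg _) hf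
  have h3 : ∑ i ∈ s, g i ^ 2 ≤ ∑' i, g i ^ 2 := Summable.sum_le_tsum s (fun i _ => sq_nonneg _) hg
  have h4 : 0 ≤ ∑ i ∈ s, f i * g i := Finset.sum_nonneg fun i _ => mul_nonneg (hf0 i) (hg0 i)
  have h5 : (0:ℝ) ≤ ∑' i, g i ^ 2 := tsum_nonneg fun i => sq_nonneg _
  have h6 : (0:ℝ) ≤ ∑ i ∈ s, g i ^ 2 := Finset.sum_nonneg fun i _ => sq_nonneg _
  have h7 : (0:ℝ) ≤ ∑' i, f i ^ 2 := tsum_nonneg fun i => sq_nonneg _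
  calc ∑ i ∈ s, f i * g i = Real.sqrt ((∑ i ∈ s, f i * g i) ^ 2) := (Real.sqrt_sq h4).symm
    _ ≤ Real.sqrt ((∑' i, f i ^ 2) * (∑' i, g i ^ 2)) := by
        refine Real.sqrt_le_sqrt (h1.trans ?_)
        exact mul_le_mul h2 h3 h6 h7
    _ = _ := Real.sqrt_mul h7 _

private lemma tsum_minkowski {ι : Type*} {w : ι → ℝ} {a b : ι → ℂ} (hw : ∀ i, 0 ≤ w i)
    (ha : Summable fun i => w i * ‖a i‖ ^ 2) (hb : Summable fun i => w i * ‖b i‖ ^ 2) :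
    Real.sqrt (∑' i, w i * ‖a i + b i‖ ^ 2) ≤
      Real.sqrt (∑' i, w i * ‖a i‖ ^ 2) + Real.sqrt (∑' i, w i * ‖b i‖ ^ 2) := by
  have hf : Summable fun i => (Real.sqrt (w i) * ‖a i‖) ^ 2 := by
    refine ha.congr fun i => ?_
    rw [mul_pow, Real.sq_sqrt (hw i)]
  have hg : Summable fun i => (Real.sqrt (w i) * ‖b i‖) ^ 2 := by
    refine hb.congr fun i => ?_
    rw [mul_pow, Real.sq_sqrt (hw i)]
  have hF0 : ∀ i, 0 ≤ Real.sqrt (w i) * ‖a i‖ := fun i => mul_nonneg (Real.sqrt_nonneg _) (norm_nonneg _)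
  have hG0 : ∀ i, 0 ≤ Real.sqrt (w i) * ‖b i‖ := fun i => mul_nonneg (Real.sqrt_nonneg _) (norm_nonneg _)
  have hfg : Summable fun i => (Real.sqrt (w i) * ‖a i‖) * (Real.sqrt (w i) * ‖b i‖) := by
    refine Summable.of_nonneg_of_le (fun i => mul_nonneg (hF0 i) (hG0 i)) (fun i => ?_)
      ((hf.add hg).mul_left (1/2))
    nlinarith [sq_nonneg (Real.sqrt (w i) * ‖a i‖ - Real.sqrt (w i) * ‖b i‖)]
  have hsum3 : Summable fun i => (Real.sqrt (w i) * ‖a i‖ + Real.sqrt (w i) * ‖b i‖) ^ 2 := by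
    refine ((hf.add hg).add (hfg.mul_left 2)).congr fun i => ?_
    ring
  have hptw : ∀ i, w i * ‖a i + b i‖ ^ 2 ≤
      (Real.sqrt (w i) * ‖a i‖ + Real.sqrt (w i) * ‖b i‖) ^ 2 := fun i => by
    calc w i * ‖a i + b i‖ ^ 2 ≤ w i * (‖a i‖ + ‖b i‖) ^ 2 := by
          refine mul_le_mul_of_nonneg_left ?_ (hw i)
          exact pow_le_pow_left₀ (norm_nonneg _) (norm_add_le _ _) 2
      _ = (Real.sqrt (w i) * ‖a i‖ + Real.sqrt (w i) * ‖b i‖) ^ 2 := by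
          rw [← mul_add, mul_pow, Real.sq_sqrt (hw i)]
  have hsummbl : Summable fun i => w i * ‖a i + b i‖ ^ 2 :=
    Summable.of_nonneg_of_le (fun i => mul_nonneg (hw i) (sq_nonneg _)) hptw hsum3
  have hFA : ∑' i, (Real.sqrt (w i) * ‖a i‖) ^ 2 = ∑' i, w i * ‖a i‖ ^ 2 :=
    tsum_congr fun i => by rw [mul_pow, Real.sq_sqrt (hw i)]
  have hGB : ∑' i, (Real.sqrt (w i) * ‖b i‖) ^ 2 = ∑' i, w i * ‖b i‖ ^ 2 :=
    tsum_congr fun i => by rw [mul_pow, Real.sq_sqrt (hw i)]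
  set SA := ∑' i, w i * ‖a i‖ ^ 2 with hSA
  set SB := ∑' i, w i * ‖b i‖ ^ 2 with hSB
  have hSA0 : 0 ≤ SA := tsum_nonneg fun i => mul_nonneg (hw i) (sq_nonneg _)
  have hSB0 : 0 ≤ SB := tsum_nonneg fun i => mul_nonneg (hw i) (sq_nonneg _)
  have hcs := tsum_cs hF0 hG0 hf hg
  rw [hFA, hGB] at hcs
  have hexp : ∑' i, (Real.sqrt (w i) * ‖a i‖ + Real.sqrt (w i) * ‖b i‖) ^ 2 =
      (∑' i, (Real.sqrt (w i) * ‖a i‖) ^ 2) + (∑' i, (Real.sqrt (w i) * ‖b i‖) ^ 2)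
        + 2 * ∑' i, (Real.sqrt (w i) * ‖a i‖) * (Real.sqrt (w i) * ‖b i‖) := by
    rw [← tsum_mul_left, ← Summable.tsum_add hf hg, ← Summable.tsum_add (hf.add hg) (hfg.mul_left 2)]
    exact tsum_congr fun i => by ring
  have hkey : ∑' i, w i * ‖a i + b i‖ ^ 2 ≤ (Real.sqrt SA + Real.sqrt SB) ^ 2 := by
    have h1 : ∑' i, w i * ‖a i + b i‖ ^ 2 ≤
        ∑' i, (Real.sqrt (w i) * ‖a i‖ + Real.sqrt (w i) * ‖b i‖) ^ 2 :=
      Summable.tsum_le_tsum hptw hsummbl hsum3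
    have h2 : (Real.sqrt SA + Real.sqrt SB) ^ 2 = SA + SB + 2 * (Real.sqrt SA * Real.sqrt SB) := by
      rw [add_sq, Real.sq_sqrt hSA0, Real.sq_sqrt hSB0]; ring
    rw [h2]
    refine h1.trans ?_
    rw [hexp, hFA, hGB]
    linarith [hcs]
  have h7 : (0:ℝ) ≤ Real.sqrt SA + Real.sqrt SB := by positivity
  refine (Real.sqrt_le_sqrt hkey).trans ?_
  rw [Real.sqrt_sq h7]

private lemma sobW_pos (s : ℝ) (n : ℤ) : 0 < sobW s n := by
  rw [sobW]
  split_ifs with h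
  · norm_num
  · exact Real.rpow_pos_of_pos (abs_pos.mpr (by exact_mod_cast h)) _

private lemma key_weight {q : ℝ} (hq : 0 ≤ q) {N : ℕ} (hN : 1 ≤ N) {n ℓ : ℤ}
    (h1 : -(N : ℤ) ≤ 2 * n) (h2 : 2 * n < (N : ℤ)) (hl : ℓ ≠ 0) :
    sobW (2 * q) n * (sobW (2 * (q + 1)) (n + ℓ * N))⁻¹ ≤
      4 * ((N : ℝ) ^ 2)⁻¹ * ((ℓ : ℝ) ^ 2)⁻¹ := by
  have hNR : (1:ℝ) ≤ (N:ℝ) := by exact_mod_cast hN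
  have hlR : (1:ℝ) ≤ |(ℓ:ℝ)| := by exact_mod_cast Int.one_le_abs hl
  have hn2 : |(n:ℝ)| ≤ (N:ℝ)/2 := by
    have h3 : |2*n| ≤ (N:ℤ) := abs_le.mpr ⟨h1, by omega⟩
    have h4 : |(2*n : ℤ)| ≤ ((N:ℤ):ℝ) := by exact_mod_cast h3
    rw [Int.cast_abs] at h4
    push_cast at h4
    rw [abs_mul] at h4
    simp at h4
    linarith [h4]
  set m : ℤ := n + ℓ * N with hm
  have hmR : (m:ℝ) = (n:ℝ) + (ℓ:ℝ)*(N:ℝ) := by push_cast [hm]; ring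
  have habs : |(ℓ:ℝ)*(N:ℝ)| ≤ |(m:ℝ)| + |(n:ℝ)| := by
    have hh : (ℓ:ℝ)*(N:ℝ) = (m:ℝ) + (-(n:ℝ)) := by rw [hmR]; ring
    rw [hh]
    calc |(m:ℝ) + -(n:ℝ)| ≤ |(m:ℝ)| + |(-(n:ℝ))| := abs_add_le _ _
      _ = |(m:ℝ)| + |(n:ℝ)| := by rw [abs_neg]
  have habs2 : |(ℓ:ℝ)*(N:ℝ)| = |(ℓ:ℝ)| * (N:ℝ) := by
    rw [abs_mul, abs_of_nonneg (by linarith : (0:ℝ) ≤ (N:ℝ))]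
  have hml : (N:ℝ) * |(ℓ:ℝ)| / 2 ≤ |(m:ℝ)| := by
    rw [habs2] at habs; nlinarith
  have hmpos : (0:ℝ) < |(m:ℝ)| := by nlinarith
  have hm0 : m ≠ 0 := by
    intro h; rw [h] at hmpos; simp at hmpos
  have hrw : sobW (2 * (q + 1)) m = |(m:ℝ)| ^ (2*q) * |(m:ℝ)| ^ (2:ℕ) := by
    rw [sobW, if_neg hm0, show (2*(q+1)) = 2*q + (2:ℝ) by ring, Real.rpow_add hmpos,
      show ((2:ℝ)) = ((2:ℕ):ℝ) by norm_num, Real.rpow_natCast]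
  have hWm : sobW (2 * q) n ≤ |(m:ℝ)| ^ (2*q) := by
    rcases eq_or_ne n 0 with h | h
    · rw [sobW, if_pos h]
      have hn0 : |(n:ℝ)| = 0 := by rw [h]; simp
      have hm1 : (1:ℝ) ≤ |(m:ℝ)| := by
        rw [habs2, hn0] at habs; nlinarith
      calc (1:ℝ) = 1 ^ (2*q) := (Real.one_rpow _).symm
        _ ≤ |(m:ℝ)| ^ (2*q) := Real.rpow_le_rpow zero_le_one hm1 (by linarith)
    · rw [sobW, if_neg h]
      refine Real.rpow_le_rpow (abs_nonneg _) ?_ (by linarith)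
      nlinarith
  have hpow_pos : (0:ℝ) < |(m:ℝ)| ^ (2*q) := Real.rpow_pos_of_pos hmpos _
  have hsq_pos : (0:ℝ) < |(m:ℝ)| ^ (2:ℕ) := by positivity
  calc sobW (2 * q) n * (sobW (2 * (q + 1)) m)⁻¹
      ≤ |(m:ℝ)| ^ (2*q) * (sobW (2 * (q + 1)) m)⁻¹ := by
        refine mul_le_mul_of_nonneg_right hWm ?_
        rw [hrw]; positivity
    _ = (|(m:ℝ)| ^ (2:ℕ))⁻¹ := by
        rw [hrw, mul_inv, ← mul_assoc, mul_inv_cancel₀ hpow_pos.ne', one_mul]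
    _ ≤ 4 * ((N : ℝ) ^ 2)⁻¹ * ((ℓ : ℝ) ^ 2)⁻¹ := by
        have hle : (N:ℝ)^2 * (ℓ:ℝ)^2 / 4 ≤ |(m:ℝ)| ^ (2:ℕ) := by
          nlinarith [mul_self_le_mul_self (by positivity : (0:ℝ) ≤ (N:ℝ)*|(ℓ:ℝ)|/2) hml,
            sq_abs ((ℓ:ℝ))]
        have hpos : (0:ℝ) < (N:ℝ)^2 * (ℓ:ℝ)^2 / 4 := by
          have hℓ : ((ℓ:ℝ)) ≠ 0 := by exact_mod_cast hl
          positivity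
        have hinv := inv_anti₀ hpos hle
        refine hinv.trans_eq ?_
        field_simp

/-- For any `q ≥ 0` there is `C_q > 0` with
`‖Q_N f‖_q ≤ ‖f‖_q + C_q N^{-1} ‖f‖_{q+1}` for all `f ∈ H^{q+1}` and all `N ≥ 1`. -/
theorem interpolation_stability (q : ℝ) (hq : 0 ≤ q) :
    ∃ C > 0, ∀ N : ℕ, 1 ≤ N → ∀ φ : ℤ → ℂ,
      Summable (fun n : ℤ => sobW (2 * (q + 1)) n * ‖φ n‖ ^ 2) →
      Real.sqrt (sobSq q (QN N φ)) ≤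
        Real.sqrt (sobSq q φ) + C * (N : ℝ) ^ (-1 : ℝ) * Real.sqrt (sobSq (q + 1) φ) := by
  classical
  have hZsum : Summable (fun ℓ : ℤ => ((ℓ:ℝ)^2)⁻¹) := by
    have h := (Real.summable_one_div_int_pow (p := 2)).mpr one_lt_two
    refine h.congr fun ℓ => ?_
    rw [one_div]
  set Z : ℝ := ∑' ℓ : ℤ, ((ℓ:ℝ)^2)⁻¹ with hZdef
  have hZ1 : (1:ℝ) ≤ Z := by
    have h := Summable.le_tsum hZsum 1 (fun j _ => by positivity)
    simpa using h
  have hZ0 : (0:ℝ) ≤ Z := by linarith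
  refine ⟨2 * Real.sqrt Z, mul_pos two_pos (Real.sqrt_pos.mpr (by linarith)), ?_⟩
  intro N hN φ hφ
  have hNR : (1:ℝ) ≤ (N:ℝ) := by exact_mod_cast hN
  have hNZne : ((N:ℤ)) ≠ 0 := by
    have : (1:ℤ) ≤ (N:ℤ) := by exact_mod_cast hN
    omega
  have hw1pos : ∀ n : ℤ, 0 < sobW (2*(q+1)) n := fun n => sobW_pos _ n
  have hw0pos : ∀ n : ℤ, 0 < sobW (2*q) n := fun n => sobW_pos _ n
  have hsobmono : ∀ n : ℤ, sobW (2*q) n ≤ sobW (2*(q+1)) n := by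
    intro n
    rw [sobW, sobW]
    split_ifs with h
    · exact le_rfl
    · have h1 : (1:ℝ) ≤ |(n:ℝ)| := by exact_mod_cast Int.one_le_abs h
      exact Real.rpow_le_rpow_of_exponent_le h1 (by linarith)
  have hφ0 : Summable (fun n : ℤ => sobW (2*q) n * ‖φ n‖^2) := by
    refine Summable.of_nonneg_of_le (fun n => mul_nonneg (hw0pos n).le (sq_nonneg _))
      (fun n => ?_) hφ
    exact mul_le_mul_of_nonneg_right (hsobmono n) (sq_nonneg _)
  set a : ℤ → ℂ := fun n => if -(N:ℤ) ≤ 2*n ∧ 2*n < (N:ℤ) then φ n else 0 with hadef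
  set b : ℤ → ℂ := fun n =>
    if -(N:ℤ) ≤ 2*n ∧ 2*n < (N:ℤ) then (∑' ℓ:ℤ, φ (n + ℓ*N)) - φ n else 0 with hbdef
  have hQab : ∀ n, QN N φ n = a n + b n := by
    intro n
    simp only [QN, hadef, hbdef]
    by_cases h : -(N:ℤ) ≤ 2*n ∧ 2*n < (N:ℤ)
    · simp only [if_pos h]; ring
    · simp only [if_neg h]; ring
  set W : Finset ℤ :=
    (Finset.Icc (-(N:ℤ)) (N:ℤ)).filter (fun n => -(N:ℤ) ≤ 2*n ∧ 2*n < (N:ℤ)) with hWdef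
  have hmemW : ∀ n : ℤ, (-(N:ℤ) ≤ 2*n ∧ 2*n < (N:ℤ)) → n ∈ W := by
    intro n hn
    rw [hWdef, Finset.mem_filter, Finset.mem_Icc]
    exact ⟨⟨by omega, by omega⟩, hn⟩
  have hWP : ∀ n ∈ W, -(N:ℤ) ≤ 2*n ∧ 2*n < (N:ℤ) := by
    intro n hn; rw [hWdef, Finset.mem_filter] at hn; exact hn.2
  have hbz : ∀ n ∉ W, b n = 0 := by
    intro n hn
    simp only [hbdef]
    exact if_neg (fun h => hn (hmemW n h))
  set U : ℤ → ℝ := fun n =>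
    ∑' ℓ : ℤ, (if ℓ = 0 then 0 else sobW (2*(q+1)) (n+ℓ*N) * ‖φ (n+ℓ*N)‖^2) with hUdef
  have key : ∀ n : ℤ, (-(N:ℤ) ≤ 2*n ∧ 2*n < (N:ℤ)) →
      sobW (2*q) n * ‖b n‖^2 ≤ (4 * ((N:ℝ)^2)⁻¹ * Z) * U n := by
    intro n hn
    have hinj : Function.Injective (fun ℓ : ℤ => n + ℓ * (N:ℤ)) := by
      intro x y h
      simp only at h
      have h' : x * (N:ℤ) = y * (N:ℤ) := by linarith
      exact mul_right_cancel₀ hNZne h'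
    have hcomp : Summable (fun ℓ : ℤ => sobW (2*(q+1)) (n+ℓ*N) * ‖φ (n+ℓ*N)‖^2) :=
      hφ.comp_injective hinj
    set u : ℤ → ℝ := fun ℓ =>
      if ℓ = 0 then 0 else Real.sqrt (sobW (2*(q+1)) (n+ℓ*N)) * ‖φ (n+ℓ*N)‖ with hudef
    set v : ℤ → ℝ := fun ℓ =>
      if ℓ = 0 then 0 else (Real.sqrt (sobW (2*(q+1)) (n+ℓ*N)))⁻¹ with hvdef
    have hu0 : ∀ ℓ, 0 ≤ u ℓ := by
      intro ℓ; simp only [hudef]; split_ifs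
      · exact le_rfl
      · positivity
    have hv0 : ∀ ℓ, 0 ≤ v ℓ := by
      intro ℓ; simp only [hvdef]; split_ifs
      · exact le_rfl
      · positivity
    have hu2 : ∀ ℓ, u ℓ^2 = (if ℓ = 0 then 0 else sobW (2*(q+1)) (n+ℓ*N) * ‖φ (n+ℓ*N)‖^2) := by
      intro ℓ; simp only [hudef]; split_ifs with h
      · norm_num
      · rw [mul_pow, Real.sq_sqrt (hw1pos _).le]
    have hsum_u2 : Summable (fun ℓ => u ℓ^2) := by
      refine Summable.of_nonneg_of_le (fun ℓ => sq_nonneg _) (fun ℓ => ?_) hcomp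
      rw [hu2]; split_ifs with h
      · exact mul_nonneg (hw1pos _).le (sq_nonneg _)
      · exact le_rfl
    have hKv : ∀ ℓ : ℤ, sobW (2*q) n * v ℓ^2 ≤ 4 * ((N:ℝ)^2)⁻¹ * ((ℓ:ℝ)^2)⁻¹ := by
      intro ℓ; simp only [hvdef]; split_ifs with h
      · subst h; norm_num
      · have h2 : ((Real.sqrt (sobW (2*(q+1)) (n+ℓ*N)))⁻¹)^2
            = (sobW (2*(q+1)) (n+ℓ*N))⁻¹ := by
          rw [← Real.sqrt_inv, Real.sq_sqrt (inv_nonneg.mpr (hw1pos _).le)]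
        rw [h2]
        exact key_weight hq hN hn.1 hn.2 h
    have hsum_v2 : Summable (fun ℓ => v ℓ^2) := by
      refine Summable.of_nonneg_of_le (fun ℓ => sq_nonneg _) (fun ℓ => ?_)
        ((hZsum.mul_left (4 * ((N:ℝ)^2)⁻¹)).mul_left (sobW (2*q) n)⁻¹)
      have hpos := hw0pos n
      rw [show v ℓ^2 = (sobW (2*q) n)⁻¹ * (sobW (2*q) n * v ℓ^2) by field_simp]
      exact mul_le_mul_of_nonneg_left (hKv ℓ) (inv_nonneg.mpr hpos.le)
    have hZsummul : Summable (fun ℓ:ℤ => 4 * ((N:ℝ)^2)⁻¹ * ((ℓ:ℝ)^2)⁻¹) := hZsum.mul_left _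
    have hv2tsum : sobW (2*q) n * ∑' ℓ, v ℓ^2 ≤ 4 * ((N:ℝ)^2)⁻¹ * Z := by
      rw [← tsum_mul_left]
      calc ∑' ℓ, sobW (2*q) n * v ℓ^2 ≤ ∑' ℓ:ℤ, 4 * ((N:ℝ)^2)⁻¹ * ((ℓ:ℝ)^2)⁻¹ :=
            Summable.tsum_le_tsum hKv (hsum_v2.mul_left _) hZsummul
        _ = 4 * ((N:ℝ)^2)⁻¹ * Z := by rw [tsum_mul_left]
    have hsqrtpos : ∀ m : ℤ, 0 < Real.sqrt (sobW (2*(q+1)) m) :=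
      fun m => Real.sqrt_pos.mpr (hw1pos m)
    have huv : ∀ ℓ : ℤ, ‖(if ℓ = 0 then (0:ℂ) else φ (n+ℓ*N))‖ = u ℓ * v ℓ := by
      intro ℓ; simp only [hudef, hvdef]; split_ifs with h
      · simp
      · rw [mul_comm (Real.sqrt _) ‖φ (n+ℓ*N)‖, mul_assoc,
          mul_inv_cancel₀ (hsqrtpos _).ne', mul_one]
    have hsum_uv : Summable (fun ℓ => u ℓ * v ℓ) := by
      refine Summable.of_nonneg_of_le (fun ℓ => mul_nonneg (hu0 ℓ) (hv0 ℓ)) (fun ℓ => ?_)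
        ((hsum_u2.add hsum_v2).mul_left (1/2))
      nlinarith [sq_nonneg (u ℓ - v ℓ)]
    have hψs : Summable (fun ℓ : ℤ => if ℓ = 0 then (0:ℂ) else φ (n+ℓ*N)) := by
      refine Summable.of_norm ?_
      exact hsum_uv.congr fun ℓ => (huv ℓ).symm
    have hδs : Summable (fun ℓ : ℤ => if ℓ = 0 then φ n else (0:ℂ)) :=
      summable_of_ne_finset_zero (s := {0}) (fun ℓ hℓ => if_neg (by simpa using hℓ))
    have hsum_phi : Summable (fun ℓ : ℤ => φ (n + ℓ*N)) := by
      refine ((hψs.add hδs).congr fun ℓ => ?_)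
      by_cases h : ℓ = 0
      · subst h; simp
      · simp [h]
    have hbn : b n = ∑' ℓ : ℤ, (if ℓ = 0 then (0:ℂ) else φ (n+ℓ*N)) := by
      simp only [hbdef]
      rw [if_pos hn, Summable.tsum_eq_add_tsum_ite hsum_phi 0]
      simp
    have hbnorm : ‖b n‖ ≤ Real.sqrt (∑' ℓ, u ℓ^2) * Real.sqrt (∑' ℓ, v ℓ^2) := by
      rw [hbn]
      calc ‖∑' ℓ : ℤ, (if ℓ = 0 then (0:ℂ) else φ (n+ℓ*N))‖
          ≤ ∑' ℓ : ℤ, ‖(if ℓ = 0 then (0:ℂ) else φ (n+ℓ*N))‖ :=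
            norm_tsum_le_tsum_norm (hsum_uv.congr fun ℓ => (huv ℓ).symm)
        _ = ∑' ℓ, u ℓ * v ℓ := tsum_congr huv
        _ ≤ _ := tsum_cs hu0 hv0 hsum_u2 hsum_v2
    have hU0 : (0:ℝ) ≤ ∑' ℓ, u ℓ^2 := tsum_nonneg fun ℓ => sq_nonneg _
    have hV0 : (0:ℝ) ≤ ∑' ℓ, v ℓ^2 := tsum_nonneg fun ℓ => sq_nonneg _
    calc sobW (2*q) n * ‖b n‖^2
        ≤ sobW (2*q) n * ((∑' ℓ, u ℓ^2) * (∑' ℓ, v ℓ^2)) := by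
          refine mul_le_mul_of_nonneg_left ?_ (hw0pos n).le
          calc ‖b n‖^2 ≤ (Real.sqrt (∑' ℓ, u ℓ^2) * Real.sqrt (∑' ℓ, v ℓ^2))^2 :=
                pow_le_pow_left₀ (norm_nonneg _) hbnorm 2
            _ = _ := by rw [mul_pow, Real.sq_sqrt hU0, Real.sq_sqrt hV0]
      _ = (∑' ℓ, u ℓ^2) * (sobW (2*q) n * ∑' ℓ, v ℓ^2) := by ring
      _ ≤ (∑' ℓ, u ℓ^2) * (4 * ((N:ℝ)^2)⁻¹ * Z) := mul_le_mul_of_nonneg_left hv2tsum hU0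
      _ = (4 * ((N:ℝ)^2)⁻¹ * Z) * U n := by
          simp only [hUdef]
          rw [← tsum_congr hu2]; ring
  have hbz' : ∀ n ∉ W, sobW (2*q) n * ‖b n‖^2 = 0 := fun n hn => by
    rw [hbz n hn]; simp
  have hbsum : Summable (fun n => sobW (2*q) n * ‖b n‖^2) := summable_of_ne_finset_zero hbz'
  have hbt : (∑' n, sobW (2*q) n * ‖b n‖^2) = ∑ n ∈ W, sobW (2*q) n * ‖b n‖^2 :=
    tsum_eq_sum hbz'
  have hWU : ∑ n ∈ W, U n ≤ sobSq (q+1) φ := by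
    set e : (↥W) × ℤ → ℤ := fun p => (p.1 : ℤ) + p.2 * N with hedef
    have he : Function.Injective e := by
      rintro ⟨⟨n1, hn1⟩, l1⟩ ⟨⟨n2, hn2⟩, l2⟩ h
      simp only [hedef] at h
      obtain ⟨ha1, hb1⟩ := hWP n1 hn1
      obtain ⟨ha2, hb2⟩ := hWP n2 hn2
      have hd : (N:ℤ) ∣ (n1 - n2) := ⟨l2 - l1, by linear_combination h⟩
      have habs : |n1 - n2| < (N:ℤ) := abs_lt.mpr ⟨by omega, by omega⟩
      have h0 : n1 - n2 = 0 := Int.eq_zero_of_abs_lt_dvd hd habs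
      have hn12 : n1 = n2 := by omega
      subst hn12
      have h' : l1 * (N:ℤ) = l2 * (N:ℤ) := by linarith
      have hl12 : l1 = l2 := mul_right_cancel₀ hNZne h'
      subst hl12; rfl
    have hge : Summable ((fun m : ℤ => sobW (2*(q+1)) m * ‖φ m‖^2) ∘ e) :=
      hφ.comp_injective he
    set g : (↥W) × ℤ → ℝ :=
      fun p => if p.2 = 0 then 0 else sobW (2*(q+1)) (e p) * ‖φ (e p)‖^2 with hgdef
    have hg_le : ∀ p, g p ≤ sobW (2*(q+1)) (e p) * ‖φ (e p)‖^2 := by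
      intro p; simp only [hgdef]; split_ifs
      · exact mul_nonneg (sobW_pos _ _).le (sq_nonneg _)
      · exact le_rfl
    have hg0 : ∀ p, 0 ≤ g p := by
      intro p; simp only [hgdef]; split_ifs
      · exact le_rfl
      · exact mul_nonneg (sobW_pos _ _).le (sq_nonneg _)
    have hgs : Summable g := Summable.of_nonneg_of_le hg0 hg_le hge
    have h1 : ∑' p, g p ≤ ∑' m : ℤ, sobW (2*(q+1)) m * ‖φ m‖^2 :=
      Summable.tsum_le_tsum_of_inj e he (fun c _ => mul_nonneg (sobW_pos _ _).le (sq_nonneg _))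
        hg_le hgs hφ
    have h2 : ∑' p, g p = ∑ n ∈ W, U n := by
      rw [Summable.tsum_prod hgs]
      have hinner : ∀ x : ↥W, (∑' ℓ : ℤ, g (x, ℓ)) = U (x:ℤ) := by
        intro x
        simp only [hUdef, hgdef, hedef]
      rw [tsum_congr hinner, tsum_fintype, Finset.sum_coe_sort W U]
    calc ∑ n ∈ W, U n = ∑' p, g p := h2.symm
      _ ≤ ∑' m : ℤ, sobW (2*(q+1)) m * ‖φ m‖^2 := h1
      _ = sobSq (q+1) φ := by rw [sobSq]
  have hS1nonneg : 0 ≤ sobSq (q+1) φ := by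
    rw [sobSq]; exact tsum_nonneg fun n => mul_nonneg (sobW_pos _ _).le (sq_nonneg _)
  have hbtot : ∑' n, sobW (2*q) n * ‖b n‖^2 ≤ (4*((N:ℝ)^2)⁻¹*Z) * sobSq (q+1) φ := by
    rw [hbt]
    calc ∑ n ∈ W, sobW (2*q) n * ‖b n‖^2 ≤ ∑ n ∈ W, (4*((N:ℝ)^2)⁻¹*Z) * U n :=
          Finset.sum_le_sum fun n hn => key n (hWP n hn)
      _ = (4*((N:ℝ)^2)⁻¹*Z) * ∑ n ∈ W, U n := by rw [Finset.mul_sum]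
      _ ≤ _ := by
          refine mul_le_mul_of_nonneg_left hWU ?_
          have : (0:ℝ) < (N:ℝ)^2 := by positivity
          positivity
  have haptw : ∀ n, sobW (2*q) n * ‖a n‖^2 ≤ sobW (2*q) n * ‖φ n‖^2 := by
    intro n
    simp only [hadef]
    split_ifs
    · exact le_rfl
    · simpa using mul_nonneg (hw0pos n).le (sq_nonneg ‖φ n‖)
  have hasum : Summable (fun n => sobW (2*q) n * ‖a n‖^2) :=
    Summable.of_nonneg_of_le (fun n => mul_nonneg (hw0pos n).le (sq_nonneg _)) haptw hφ0
  have hat : ∑' n, sobW (2*q) n * ‖a n‖^2 ≤ sobSq q φ := by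
    rw [sobSq]
    exact Summable.tsum_le_tsum haptw hasum hφ0
  have hmink := tsum_minkowski (w := fun n => sobW (2*q) n) (a := a) (b := b)
    (fun n => (hw0pos n).le) hasum hbsum
  have hQeq : sobSq q (QN N φ) = ∑' n, sobW (2*q) n * ‖a n + b n‖^2 := by
    rw [sobSq]; exact tsum_congr fun n => by rw [hQab n]
  have hCpos : (0:ℝ) ≤ 2 * Real.sqrt Z * (N:ℝ)^(-1:ℝ) := by positivity
  have hfin2 : Real.sqrt (∑' n, sobW (2*q) n * ‖b n‖^2)
      ≤ 2 * Real.sqrt Z * (N:ℝ)^(-1:ℝ) * Real.sqrt (sobSq (q+1) φ) := by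
    have hc : (4*((N:ℝ)^2)⁻¹*Z) * sobSq (q+1) φ
        = (2*Real.sqrt Z*(N:ℝ)^(-1:ℝ))^2 * sobSq (q+1) φ := by
      rw [Real.rpow_neg_one, mul_pow, mul_pow, Real.sq_sqrt hZ0, inv_pow]
      ring
    calc Real.sqrt (∑' n, sobW (2*q) n * ‖b n‖^2)
        ≤ Real.sqrt ((2*Real.sqrt Z*(N:ℝ)^(-1:ℝ))^2 * sobSq (q+1) φ) :=
          Real.sqrt_le_sqrt (hbtot.trans_eq hc)
      _ = _ := by rw [Real.sqrt_mul (sq_nonneg _), Real.sqrt_sq hCpos]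
  calc Real.sqrt (sobSq q (QN N φ))
      = Real.sqrt (∑' n, sobW (2*q) n * ‖a n + b n‖^2) := by rw [hQeq]
    _ ≤ Real.sqrt (∑' n, sobW (2*q) n * ‖a n‖^2)
        + Real.sqrt (∑' n, sobW (2*q) n * ‖b n‖^2) := hmink
    _ ≤ Real.sqrt (sobSq q φ)
        + 2 * Real.sqrt Z * (N:ℝ)^(-1:ℝ) * Real.sqrt (sobSq (q+1) φ) :=
      add_le_add (Real.sqrt_le_sqrt hat) hfin2
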